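/- Per-time-step total-variation drift bound. Let π and π' be policies of a finite-horizon MDP and τ > 0. Suppose π'_h(·|x) = π_h(·|x) for every h ∈ {1,…,H} and every x ∉ G_{h,τ}. Then for all α ∈ [0,1] and every h ∈ {1,…,H}, the mixture policy π_α = (1−α)π + απ' satisfies ‖d_{π_α}^h − d_π^h‖_TV ≤ α · Σ_{h''=1}^{h} p_{π,h''}. -/
import Mathlib


open Finset MeasureTheory

attribute [local instance] Classical.propDecidable

/-- A finite-horizon MDP with finite state space `X`, finite action space `Y`,
horizon `H ≥ 1`, initial distribution `μ`, transition kernels `P` and rewards `r`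
(used for time steps `h ∈ {1, …, H}`). -/
structure MDP (X Y : Type*) [Fintype X] [Fintype Y] where
  H : ℕ
  H_pos : 1 ≤ H
  μ : X → ℝ
  μ_nonneg : ∀ x, 0 ≤ μ x
  μ_sum_one : ∑ x, μ x = 1
  P : ℕ → X → Y → X → ℝ
  P_nonneg : ∀ h x y x', 0 ≤ P h x y x'
  P_sum_one : ∀ h x y, ∑ x', P h x y x' = 1
  r : ℕ → X → Y → ℝ

variable {X Y : Type*} [Fintype X] [Fintype Y]

/-- A policy assigns to each time step and state a probability distribution over actions. -/
def IsPolicy (M : MDP X Y) (π : ℕ → X → Y → ℝ) : Prop :=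
  (∀ h x y, 0 ≤ π h x y) ∧ ∀ h x, ∑ y, π h x y = 1

/-- Value function `V_h^π(x)`, defined by backwards recursion with `V_{H+1}^π ≡ 0`. -/
noncomputable def Vval (M : MDP X Y) (π : ℕ → X → Y → ℝ) (h : ℕ) (x : X) : ℝ :=
  if hh : M.H < h then 0
  else ∑ y, π h x y * (M.r h x y + ∑ x', M.P h x y x' * Vval M π (h + 1) x')
termination_by M.H + 1 - h
decreasing_by omega

/-- Action-value function `Q_h^π(x,y)`. -/
noncomputable def Qval (M : MDP X Y) (π : ℕ → X → Y → ℝ) (h : ℕ) (x : X) (y : Y) : ℝ :=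
  M.r h x y + ∑ x', M.P h x y x' * Vval M π (h + 1) x'

/-- Advantage function `A_h^π(x,y) = Q_h^π(x,y) − V_h^π(x)`. -/
noncomputable def Aval (M : MDP X Y) (π : ℕ → X → Y → ℝ) (h : ℕ) (x : X) (y : Y) : ℝ :=
  Qval M π h x y - Vval M π h x

/-- Time-`h` state distribution `d_π^h` (for `h ∈ {1, …, H}`), with `d_π^1 = μ`. -/
noncomputable def dState (M : MDP X Y) (π : ℕ → X → Y → ℝ) : ℕ → X → ℝ
  | 0 => M.μ
  | 1 => M.μ
  | (h + 2) => fun x' => ∑ x, ∑ y, dState M π (h + 1) x * π (h + 1) x y * M.P (h + 1) x y x'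

/-- Expected return `J(π)`. -/
noncomputable def J (M : MDP X Y) (π : ℕ → X → Y → ℝ) : ℝ :=
  ∑ x, M.μ x * Vval M π 1 x

/-- Policy advantage `𝔸_{π,μ}(π') = (1/H) Σ_h E_{x~d_π^h} E_{y~π'_h(·|x)}[A_h^π(x,y)]`. -/
noncomputable def polAdv (M : MDP X Y) (π π' : ℕ → X → Y → ℝ) : ℝ :=
  ((M.H : ℝ))⁻¹ * ∑ h ∈ Icc 1 M.H, ∑ x, dState M π h x * ∑ y, π' h x y * Aval M π h x y

/-- The `τ`-improvable set at time `h`: states where `max_y A_h^π(x,y) ≥ τ`. -/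
noncomputable def Gset (M : MDP X Y) (π : ℕ → X → Y → ℝ) (τ : ℝ) (h : ℕ) : Set X :=
  {x | τ ≤ ⨆ y, Aval M π h x y}

/-- `p_{π,h}`: probability of the `τ`-improvable set at time `h` under `d_π^h`. -/
noncomputable def pGh (M : MDP X Y) (π : ℕ → X → Y → ℝ) (τ : ℝ) (h : ℕ) : ℝ :=
  ∑ x, if x ∈ Gset M π τ h then dState M π h x else 0

/-- Coverage `p_π = (1/H) Σ_h p_{π,h}`. -/
noncomputable def coverage (M : MDP X Y) (π : ℕ → X → Y → ℝ) (τ : ℝ) : ℝ :=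
  ((M.H : ℝ))⁻¹ * ∑ h ∈ Icc 1 M.H, pGh M π τ h

/-- Conditional policy advantage on the improvable set,
`𝔸^G_{π,μ}(π') = E[A_h^π(x,y) | x ∈ G_{h,τ}]` with `h ~ Unif{1,…,H}`, `x ~ d_π^h`,
`y ~ π'_h(·|x)`. -/
noncomputable def condAdvG (M : MDP X Y) (π π' : ℕ → X → Y → ℝ) (τ : ℝ) : ℝ :=
  (((M.H : ℝ))⁻¹ * ∑ h ∈ Icc 1 M.H, ∑ x,
      if x ∈ Gset M π τ h then dState M π h x * ∑ y, π' h x y * Aval M π h x y else 0)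
    / coverage M π τ

/-- Conditional policy advantage off the improvable set,
`𝔸^{Gc}_{π,μ}(π') = E[A_h^π(x,y) | x ∉ G_{h,τ}]`. -/
noncomputable def condAdvGc (M : MDP X Y) (π π' : ℕ → X → Y → ℝ) (τ : ℝ) : ℝ :=
  (((M.H : ℝ))⁻¹ * ∑ h ∈ Icc 1 M.H, ∑ x,
      if x ∉ Gset M π τ h then dState M π h x * ∑ y, π' h x y * Aval M π h x y else 0)
    / (1 - coverage M π τ)

/-- Total-variation distance between two (finitely supported) distributions. -/
noncomputable def tvDist (p q : X → ℝ) : ℝ := (1 / 2) * ∑ x, |p x - q x|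

/-- The statewise mixture policy `π_α = (1−α)π + απ'`. -/
def mix (α : ℝ) (π π' : ℕ → X → Y → ℝ) : ℕ → X → Y → ℝ :=
  fun h x y => (1 - α) * π h x y + α * π' h x y

/-- `ε_CPI = max_{h ∈ {1,…,H}, x} |E_{y~π'_h(·|x)}[A_h^π(x,y)]|`. -/
noncomputable def epsCPI (M : MDP X Y) (π π' : ℕ → X → Y → ℝ) : ℝ :=
  ⨆ h : (Icc 1 M.H : Finset ℕ), ⨆ x : X, |∑ y, π' h.1 x y * Aval M π h.1 x y|

lemma dState_nonneg (M : MDP X Y) (π : ℕ → X → Y → ℝ) (hπ : ∀ h x y, 0 ≤ π h x y) :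
    ∀ (h : ℕ) (x : X), 0 ≤ dState M π h x := by
  intro h
  induction h using Nat.strong_induction_on with
  | _ h ih =>
    match h with
    | 0 => exact fun x => M.μ_nonneg x
    | 1 => exact fun x => M.μ_nonneg x
    | (k+2) =>
      intro x'
      refine Finset.sum_nonneg fun x _ => Finset.sum_nonneg fun y _ => ?_
      exact mul_nonneg (mul_nonneg (ih (k+1) (by omega) x) (hπ _ _ _)) (M.P_nonneg _ _ _ _)

lemma pGh_nonneg (M : MDP X Y) (π : ℕ → X → Y → ℝ) (hπ : IsPolicy M π) (τ : ℝ) (h : ℕ) :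
    0 ≤ pGh M π τ h := by
  refine Finset.sum_nonneg fun x _ => ?_
  split
  · exact dState_nonneg M π hπ.1 h x
  · exact le_refl 0

lemma dState_succ (M : MDP X Y) (π : ℕ → X → Y → ℝ) {h : ℕ} (hh : 1 ≤ h) (x' : X) :
    dState M π (h+1) x' = ∑ x, ∑ y, dState M π h x * π h x y * M.P h x y x' := by
  match h with
  | k+1 => rfl

lemma step_bound (M : MDP X Y) (π π' : ℕ → X → Y → ℝ)
    (hπ : IsPolicy M π) (hπ' : IsPolicy M π') (τ : ℝ)
    (α : ℝ) (hα0 : 0 ≤ α) (hα1 : α ≤ 1)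
    {h : ℕ} (hh : 1 ≤ h)
    (hag : ∀ x, x ∉ Gset M π τ h → ∀ y, π' h x y = π h x y) :
    tvDist (dState M (mix α π π') (h+1)) (dState M π (h+1))
      ≤ tvDist (dState M (mix α π π') h) (dState M π h) + α * pGh M π τ h := by
  have hm0 : ∀ h x y, 0 ≤ mix α π π' h x y := fun h x y =>
    add_nonneg (mul_nonneg (by linarith) (hπ.1 _ _ _)) (mul_nonneg hα0 (hπ'.1 _ _ _))
  have hm1 : ∀ h x, ∑ y, mix α π π' h x y = 1 := by
    intro h x
    unfold mix
    rw [Finset.sum_add_distrib, ← Finset.mul_sum, ← Finset.mul_sum, hπ.2, hπ'.2]; ring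
  set f := dState M (mix α π π') with hf
  set g := dState M π with hg
  set B : X → Y → ℝ := fun x y => |f h x * mix α π π' h x y - g h x * π h x y| with hB
  have gnn : ∀ x, 0 ≤ g h x := fun x => dState_nonneg M π hπ.1 h x
  have key : ∀ x' : X, |f (h+1) x' - g (h+1) x'| ≤ ∑ x, ∑ y, B x y * M.P h x y x' := by
    intro x'
    rw [hf, hg, dState_succ M _ hh, dState_succ M _ hh, ← Finset.sum_sub_distrib]
    refine (Finset.abs_sum_le_sum_abs _ _).trans (Finset.sum_le_sum fun x _ => ?_)
    rw [← Finset.sum_sub_distrib]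
    refine (Finset.abs_sum_le_sum_abs _ _).trans (Finset.sum_le_sum fun y _ => ?_)
    rw [← sub_mul, abs_mul, abs_of_nonneg (M.P_nonneg _ _ _ _)]
  have key2 : ∀ x : X, ∑ y, B x y
      ≤ |f h x - g h x| + 2 * α * (if x ∈ Gset M π τ h then g h x else 0) := by
    intro x
    have step : ∀ y, B x y
        ≤ |f h x - g h x| * mix α π π' h x y + g h x * (α * |π' h x y - π h x y|) := by
      intro y
      have e : f h x * mix α π π' h x y - g h x * π h x y
          = (f h x - g h x) * mix α π π' h x y + g h x * (α * (π' h x y - π h x y)) := by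
        simp only [mix]; ring
      rw [hB]; simp only []
      rw [e]
      refine (abs_add_le _ _).trans ?_
      rw [abs_mul, abs_of_nonneg (hm0 h x y), abs_mul, abs_mul,
        abs_of_nonneg (gnn x), abs_of_nonneg hα0]
    refine (Finset.sum_le_sum fun y _ => step y).trans ?_
    rw [Finset.sum_add_distrib, ← Finset.mul_sum, hm1, mul_one, ← Finset.mul_sum,
      ← Finset.mul_sum]
    by_cases hxG : x ∈ Gset M π τ h
    · simp only [hxG, if_true]
      have hS : ∑ y, |π' h x y - π h x y| ≤ 2 := by
        have : ∀ y : Y, |π' h x y - π h x y| ≤ π' h x y + π h x y := fun y =>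
          (abs_sub _ _).trans (by rw [abs_of_nonneg (hπ'.1 _ _ _), abs_of_nonneg (hπ.1 _ _ _)])
        refine (Finset.sum_le_sum fun y _ => this y).trans ?_
        rw [Finset.sum_add_distrib, hπ.2, hπ'.2]; norm_num
      have : g h x * (α * ∑ y, |π' h x y - π h x y|) ≤ g h x * (α * 2) :=
        mul_le_mul_of_nonneg_left (mul_le_mul_of_nonneg_left hS hα0) (gnn x)
      linarith
    · simp only [hxG, if_false]
      have : ∀ y : Y, |π' h x y - π h x y| = 0 := fun y => by
        rw [hag x hxG y]; simp
      simp [this]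
  have swap : ∑ x', ∑ x, ∑ y, B x y * M.P h x y x' = ∑ x, ∑ y, B x y := by
    rw [Finset.sum_comm]
    refine Finset.sum_congr rfl fun x _ => ?_
    rw [Finset.sum_comm]
    refine Finset.sum_congr rfl fun y _ => ?_
    rw [← Finset.mul_sum, M.P_sum_one, mul_one]
  calc tvDist (f (h+1)) (g (h+1))
      = (1/2) * ∑ x', |f (h+1) x' - g (h+1) x'| := rfl
    _ ≤ (1/2) * ∑ x', ∑ x, ∑ y, B x y * M.P h x y x' :=
        mul_le_mul_of_nonneg_left (Finset.sum_le_sum fun x' _ => key x') (by norm_num)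
    _ = (1/2) * ∑ x, ∑ y, B x y := by rw [swap]
    _ ≤ (1/2) * ∑ x, (|f h x - g h x| + 2 * α * (if x ∈ Gset M π τ h then g h x else 0)) :=
        mul_le_mul_of_nonneg_left (Finset.sum_le_sum fun x _ => key2 x) (by norm_num)
    _ = (1/2) * (∑ x, |f h x - g h x|)
          + α * ∑ x, (if x ∈ Gset M π τ h then g h x else 0) := by
        rw [Finset.sum_add_distrib, ← Finset.mul_sum]; ring
    _ = tvDist (f h) (g h) + α * pGh M π τ h := rfl

/-- **Per-time-step total-variation drift bound.**
If `π'` agrees with `π` off the improvable sets, then for `α ∈ [0,1]` and every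
`h ∈ {1,…,H}`, `‖d_{π_α}^h − d_π^h‖_TV ≤ α · Σ_{h''=1}^h p_{π,h''}`. -/
theorem per_step_tv_drift
    {X Y : Type*} [Fintype X] [Fintype Y] [Nonempty X] [Nonempty Y]
    (M : MDP X Y) (π π' : ℕ → X → Y → ℝ)
    (hπ : IsPolicy M π) (hπ' : IsPolicy M π')
    (τ : ℝ) (hτ : 0 < τ)
    (hagree : ∀ h ∈ Icc 1 M.H, ∀ x, x ∉ Gset M π τ h → ∀ y, π' h x y = π h x y)
    (α : ℝ) (hα : α ∈ Set.Icc (0 : ℝ) 1)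
    (h : ℕ) (hh : h ∈ Icc 1 M.H) :
    tvDist (dState M (mix α π π') h) (dState M π h)
      ≤ α * ∑ h'' ∈ Icc 1 h, pGh M π τ h'' := by
  obtain ⟨hα0, hα1⟩ := hα
  rw [Finset.mem_Icc] at hh
  obtain ⟨hh1, hhM⟩ := hh
  have aux : ∀ n, 1 ≤ n → n ≤ M.H →
      tvDist (dState M (mix α π π') n) (dState M π n)
        ≤ α * ∑ h'' ∈ Icc 1 (n - 1), pGh M π τ h'' := by
    intro n hn
    induction n, hn using Nat.le_induction with
    | base =>
      intro _
      have e : tvDist (dState M (mix α π π') 1) (dState M π 1) = 0 := by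
        simp [tvDist, dState]
      rw [e]
      exact mul_nonneg hα0 (Finset.sum_nonneg fun i _ => pGh_nonneg M π hπ τ i)
    | succ n hn ih =>
      intro hle
      have hnM : n ≤ M.H := by omega
      have hstep := step_bound M π π' hπ hπ' τ α hα0 hα1 hn
        (hagree n (Finset.mem_Icc.mpr ⟨hn, hnM⟩))
      have hih := ih hnM
      obtain ⟨k, rfl⟩ : ∃ k, n = k + 1 := ⟨n - 1, by omega⟩
      have e : ∑ h'' ∈ Icc 1 (k + 1), pGh M π τ h''
          = (∑ h'' ∈ Icc 1 k, pGh M π τ h'') + pGh M π τ (k + 1) :=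
        Finset.sum_Icc_succ_top (by omega) _
      simp only [Nat.add_sub_cancel] at hih ⊢
      rw [e, mul_add]
      linarith
  refine (aux h hh1 hhM).trans ?_
  refine mul_le_mul_of_nonneg_left ?_ hα0
  refine Finset.sum_le_sum_of_subset_of_nonneg ?_ fun i _ _ => pGh_nonneg M π hπ τ i
  exact Finset.Icc_subset_Icc_right (by omega)
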